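/- arXiv:1308.2748 — 2 statements merged into one kernel-verified Lean document; each statement's English description precedes it below -/
import Mathlib

section
/- Let α be a finite (non-negative) measure on [−T, 0), β ≥ 0, and let y : ℝ → ℝ be measurable with y(t) = 0 for t < 0 and ∫₀^T e^{βt}|y(t)|² dt < ∞. Then ∫₀^T e^{βs} ( ∫_{[−T,0)} |y(s+θ)|² α(dθ) ) ds ≤ α̃ ∫₀^T e^{βt}|y(t)|² dt, where α̃ = ∫_{[−T,0)} e^{−βθ} α(dθ). -/
/-!
Write `g t = e^{βt} y(t)²`, so that `e^{βs} y(s+θ)² = e^{-βθ} g(s+θ)`. After Tonelli the claim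
reduces, for each fixed delay `θ ≤ 0`, to `∫₀^T g(s+θ) ds ≤ ∫₀^T g`: translating by `θ` moves the
window to `(θ, T+θ]`, which lies in `(-∞, T]`, and `g` vanishes on negative times.
-/

open MeasureTheory Set
open scoped ENNReal

theorem setLIntegral_Iic_eq_setLIntegral_Ioc_of_eq_zero {f : ℝ → ℝ≥0∞} (hf0 : ∀ t < 0, f t = 0)
    {T : ℝ} (hT : 0 ≤ T) : ∫⁻ t in Iic T, f t = ∫⁻ t in Ioc 0 T, f t := by
  have hIic : ∫⁻ t in Iic 0, f t = 0 := by
    rw [setLIntegral_congr Iio_ae_eq_Iic.symm, setLIntegral_congr_fun measurableSet_Iio hf0,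
      lintegral_zero]
  rw [← Iic_union_Ioc_eq_Iic hT, lintegral_union measurableSet_Ioc (Iic_disjoint_Ioc le_rfl),
    hIic, zero_add]

theorem setLIntegral_Ioc_comp_add_le {f : ℝ → ℝ≥0∞} (hf0 : ∀ t < 0, f t = 0)
    {θ : ℝ} (hθ : θ ≤ 0) (T : ℝ) :
    ∫⁻ s in Ioc 0 T, f (s + θ) ≤ ∫⁻ t in Ioc 0 T, f t := by
  rcases lt_or_ge T 0 with hT | hT
  · simp [Ioc_eq_empty_of_le hT.le]
  rw [(measurePreserving_add_right volume θ).setLIntegral_comp_emb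
    (measurableEmbedding_addRight θ), image_add_const_Ioc, zero_add,
    ← setLIntegral_Iic_eq_setLIntegral_Ioc_of_eq_zero hf0 hT]
  exact lintegral_mono_set fun t ht => ht.2.trans (by linarith)

theorem lintegral_Ioc_lintegral_comp_add_le {ν : Measure ℝ} [SFinite ν] (hν : ∀ᵐ θ ∂ν, θ ≤ 0)
    {w g : ℝ → ℝ≥0∞} (hw : Measurable w) (hg : Measurable g) (hg0 : ∀ t < 0, g t = 0) (T : ℝ) :
    ∫⁻ s in Ioc 0 T, ∫⁻ θ, w θ * g (s + θ) ∂ν ≤ (∫⁻ θ, w θ ∂ν) * ∫⁻ t in Ioc 0 T, g t := by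
  have hmeas : Measurable (Function.uncurry fun s θ => w θ * g (s + θ)) := by fun_prop
  rw [lintegral_lintegral_swap hmeas.aemeasurable, ← lintegral_mul_const _ hw]
  refine lintegral_mono_ae (hν.mono fun θ hθ => ?_)
  rw [lintegral_const_mul _ (by fun_prop)]
  gcongr w θ * ?_
  exact setLIntegral_Ioc_comp_add_le hg0 hθ T

theorem delay_integral_estimate_general (T β : ℝ)
    (α : Measure ℝ) [IsFiniteMeasure α]
    (y : ℝ → ℝ) (hy : Measurable y) (hy0 : ∀ t < (0 : ℝ), y t = 0) :
    (∫⁻ s in Set.Ioc 0 T, ENNReal.ofReal (Real.exp (β * s)) *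
        ∫⁻ θ in Set.Ico (-T) 0, ENNReal.ofReal ((y (s + θ)) ^ 2) ∂α) ≤
      (∫⁻ θ in Set.Ico (-T) 0, ENNReal.ofReal (Real.exp (-β * θ)) ∂α) *
        ∫⁻ t in Set.Ioc 0 T, ENNReal.ofReal (Real.exp (β * t) * (y t) ^ 2) := by
  set g : ℝ → ℝ≥0∞ := fun t => ENNReal.ofReal (Real.exp (β * t) * y t ^ 2)
  have hweight (s θ : ℝ) : ENNReal.ofReal (Real.exp (β * s)) * ENNReal.ofReal (y (s + θ) ^ 2) =
      ENNReal.ofReal (Real.exp (-β * θ)) * g (s + θ) := by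
    rw [← ENNReal.ofReal_mul (Real.exp_pos _).le, ← ENNReal.ofReal_mul (Real.exp_pos _).le,
      ← mul_assoc, ← Real.exp_add]
    ring_nf
  have hν : ∀ᵐ θ ∂α.restrict (Ico (-T) 0), θ ≤ 0 :=
    ae_restrict_of_forall_mem measurableSet_Ico fun θ hθ => hθ.2.le
  have hg0 (t : ℝ) (ht : t < 0) : g t = 0 := by simp [g, hy0 t ht]
  calc _ = ∫⁻ s in Ioc 0 T, ∫⁻ θ in Ico (-T) 0,
        ENNReal.ofReal (Real.exp (-β * θ)) * g (s + θ) ∂α := by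
        refine lintegral_congr fun s => ?_
        simp_rw [← lintegral_const_mul' _ _ ENNReal.ofReal_ne_top, hweight]
    _ ≤ _ := lintegral_Ioc_lintegral_comp_add_le hν (by fun_prop) (by fun_prop) hg0 T

/-- Fubini-type delay estimate: with `y ≡ 0` on negative times,
`∫₀^T e^{βs} ∫_{[-T,0)} |y(s+θ)|² α(dθ) ds ≤ α̃ ∫₀^T e^{βt}|y(t)|² dt`,
where `α̃ = ∫_{[-T,0)} e^{-βθ} α(dθ)`. -/
theorem delay_integral_estimate (T β : ℝ) (hT : 0 < T) (hβ : 0 ≤ β)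
    (α : Measure ℝ) [IsFiniteMeasure α]
    (hsupp : α (Set.Ico (-T) 0)ᶜ = 0)
    (y : ℝ → ℝ) (hy : Measurable y) (hy0 : ∀ t < (0 : ℝ), y t = 0)
    (hfin : (∫⁻ t in Set.Ioc 0 T,
        ENNReal.ofReal (Real.exp (β * t) * (y t) ^ 2)) < ⊤) :
    (∫⁻ s in Set.Ioc 0 T, ENNReal.ofReal (Real.exp (β * s)) *
        ∫⁻ θ in Set.Ico (-T) 0, ENNReal.ofReal ((y (s + θ)) ^ 2) ∂α) ≤
      (∫⁻ θ in Set.Ico (-T) 0, ENNReal.ofReal (Real.exp (-β * θ)) ∂α) *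
        ∫⁻ t in Set.Ioc 0 T, ENNReal.ofReal (Real.exp (β * t) * (y t) ^ 2) :=
  delay_integral_estimate_general T β α y hy hy0
end

section
/- Let α be a finite (non-negative) measure on [−T, 0), β ≥ 0, and let y : ℝ → ℝ be measurable with y(t) = 0 for t < 0 and sup_{0 ≤ t ≤ T} e^{βt}|y(t)|² < ∞. Then ∫₀^T e^{βs} ( ∫_{[−T,0)} |y(s+θ)|² α(dθ) ) ds ≤ T · α̃ · sup_{0 ≤ t ≤ T} e^{βt}|y(t)|², where α̃ = ∫_{[−T,0)} e^{−βθ} α(dθ). -/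
/-!
Shifting the weight: for `θ < 0` and `s + θ ∈ [0, T]`,
`e^{βs} |y(s+θ)|² = e^{-βθ} · e^{β(s+θ)} |y(s+θ)|² ≤ e^{-βθ} M`, while for `s + θ < 0` the left side
vanishes. Integrating this pointwise bound in `θ` against `α` and then in `s` over `(0, T]` gives the
estimate.
-/

open MeasureTheory

theorem setLIntegral_mul_setLIntegral_le {X Y : Type*} [MeasurableSpace X] [MeasurableSpace Y]
    {μ : Measure X} {ν : Measure Y} {A : Set X} {B : Set Y}
    {c : X → ENNReal} {f : X → Y → ENNReal} {g : Y → ENNReal} (hg : Measurable g)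
    (hfg : ∀ s ∈ A, ∀ θ ∈ B, c s * f s θ ≤ g θ) :
    ∫⁻ s in A, c s * ∫⁻ θ in B, f s θ ∂ν ∂μ ≤ μ A * ∫⁻ θ in B, g θ ∂ν := by
  calc ∫⁻ s in A, c s * ∫⁻ θ in B, f s θ ∂ν ∂μ
      ≤ ∫⁻ _ in A, ∫⁻ θ in B, g θ ∂ν ∂μ :=
        setLIntegral_mono measurable_const fun s hs =>
          (lintegral_const_mul_le _ _).trans (setLIntegral_mono hg (hfg s hs))
    _ = μ A * ∫⁻ θ in B, g θ ∂ν := by rw [setLIntegral_const, mul_comm]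

theorem exp_mul_sq_shift_le {T β M : ℝ} {y : ℝ → ℝ} (hM0 : 0 ≤ M)
    (hy0 : ∀ t < (0 : ℝ), y t = 0) (hM : ∀ t ∈ Set.Icc 0 T, Real.exp (β * t) * (y t) ^ 2 ≤ M)
    {s θ : ℝ} (hs : s ≤ T) (hθ : θ ≤ 0) :
    Real.exp (β * s) * (y (s + θ)) ^ 2 ≤ Real.exp (-β * θ) * M := by
  rcases lt_or_ge (s + θ) 0 with hneg | hnonneg
  · rw [hy0 _ hneg, zero_pow two_ne_zero, mul_zero]
    positivity
  · have hexp : Real.exp (β * s) = Real.exp (-β * θ) * Real.exp (β * (s + θ)) := by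
      rw [← Real.exp_add]; ring_nf
    rw [hexp, mul_assoc]
    exact mul_le_mul_of_nonneg_left (hM _ ⟨hnonneg, by linarith⟩) (Real.exp_pos _).le

theorem delay_integral_sup_estimate_general (T β : ℝ) (hT : 0 < T)
    (α : Measure ℝ)
    (y : ℝ → ℝ) (hy0 : ∀ t < (0 : ℝ), y t = 0)
    (M : ℝ) (hM : ∀ t ∈ Set.Icc 0 T, Real.exp (β * t) * (y t) ^ 2 ≤ M) :
    (∫⁻ s in Set.Ioc 0 T, ENNReal.ofReal (Real.exp (β * s)) *
        ∫⁻ θ in Set.Ico (-T) 0, ENNReal.ofReal ((y (s + θ)) ^ 2) ∂α) ≤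
      ENNReal.ofReal T *
        (∫⁻ θ in Set.Ico (-T) 0, ENNReal.ofReal (Real.exp (-β * θ)) ∂α) *
        ENNReal.ofReal M := by
  have hM0 : 0 ≤ M := le_trans (by positivity) (hM 0 ⟨le_rfl, hT.le⟩)
  have hmeas : Measurable fun θ : ℝ => ENNReal.ofReal (Real.exp (-β * θ)) := by fun_prop
  calc _ ≤ volume (Set.Ioc 0 T) *
        ∫⁻ θ in Set.Ico (-T) 0, ENNReal.ofReal (Real.exp (-β * θ)) * ENNReal.ofReal M ∂α := by
        refine setLIntegral_mul_setLIntegral_le (hmeas.mul measurable_const) fun s hs θ hθ => ?_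
        rw [← ENNReal.ofReal_mul (Real.exp_pos _).le, ← ENNReal.ofReal_mul (Real.exp_pos _).le]
        exact ENNReal.ofReal_le_ofReal (exp_mul_sq_shift_le hM0 hy0 hM hs.2 hθ.2.le)
    _ = _ := by
        rw [lintegral_mul_const _ hmeas, Real.volume_Ioc, sub_zero, mul_assoc]

/-- Delay estimate via the sup norm: with `y ≡ 0` on negative times and
`e^{βt}|y(t)|² ≤ M` on `[0, T]`,
`∫₀^T e^{βs} ∫_{[-T,0)} |y(s+θ)|² α(dθ) ds ≤ T · α̃ · M`,
where `α̃ = ∫_{[-T,0)} e^{-βθ} α(dθ)`. -/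
theorem delay_integral_sup_estimate (T β : ℝ) (hT : 0 < T) (hβ : 0 ≤ β)
    (α : Measure ℝ) [IsFiniteMeasure α]
    (hsupp : α (Set.Ico (-T) 0)ᶜ = 0)
    (y : ℝ → ℝ) (hy : Measurable y) (hy0 : ∀ t < (0 : ℝ), y t = 0)
    (M : ℝ) (hM : ∀ t ∈ Set.Icc 0 T, Real.exp (β * t) * (y t) ^ 2 ≤ M) :
    (∫⁻ s in Set.Ioc 0 T, ENNReal.ofReal (Real.exp (β * s)) *
        ∫⁻ θ in Set.Ico (-T) 0, ENNReal.ofReal ((y (s + θ)) ^ 2) ∂α) ≤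
      ENNReal.ofReal T *
        (∫⁻ θ in Set.Ico (-T) 0, ENNReal.ofReal (Real.exp (-β * θ)) ∂α) *
        ENNReal.ofReal M :=
  delay_integral_sup_estimate_general T β hT α y hy0 M hM
end
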